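/- arXiv:1404.3828 — 3 statements merged into one kernel-verified Lean document; each statement's English description precedes it below -/
import Mathlib

section
/- In the PBM-GSP mechanism (full-information setting), for every advertiser i, every keyword s, and every bid profile b in which b_i^s > v_i^s, let b̂_i denote b_i with its s-coordinate replaced by v_i^s. Then u_i(b̂_i, b_{-i}) ≥ u_i(b_i, b_{-i}); that is, bidding any value strictly above the expected keyword value v_i^s on a keyword is weakly dominated by bidding exactly v_i^s on that keyword. -/
open Finset MeasureTheory

noncomputable section

namespace PBM

attribute [local instance] Classical.propDecidable

/-- 0-indexed rank of advertiser `i` among the advertisers with a positive bid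
(higher bid first, ties broken by smaller index). -/
def rank {n : ℕ} (bs : Fin n → ℝ) (i : Fin n) : ℕ :=
  (Finset.univ.filter fun j => 0 < bs j ∧ (bs i < bs j ∨ (bs j = bs i ∧ j < i))).card

/-- 0-indexed rank of `i` among all coordinates of `x` (decreasing, ties by index). -/
def rankAll {n : ℕ} (x : Fin n → ℝ) (i : Fin n) : ℕ :=
  (Finset.univ.filter fun j => x i < x j ∨ (x j = x i ∧ j < i)).card

/-- click probability of the slot obtained by `i` (0 if `i` places no positive bid). -/
def slotW {n : ℕ} (w : ℕ → ℝ) (bs : Fin n → ℝ) (i : Fin n) : ℝ :=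
  if 0 < bs i then w (rank bs i) else 0

/-- GSP per-click payment of `i`: the bid of the advertiser ranked right below `i`
(0 if there is none). -/
def pay {n : ℕ} (bs : Fin n → ℝ) (i : Fin n) : ℝ :=
  ∑ j ∈ Finset.univ.filter (fun j => 0 < bs j ∧ rank bs j = rank bs i + 1), bs j

/-- utility of bidder `i` in the single-keyword GSP game with values `vv`. -/
def gspUtil {n : ℕ} (w : ℕ → ℝ) (vv : Fin n → ℝ) (bs : Fin n → ℝ) (i : Fin n) : ℝ :=
  slotW w bs i * (vv i - pay bs i)

variable {Q S : Type*} [Fintype Q] [Fintype S]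

/-- expected value of keyword `s` for an advertiser with per-query valuations `vq`. -/
def kwVal (P : Q → ℝ) (pi : Q → S → ℝ) (vq : Q → ℝ) (s : S) : ℝ :=
  (∑ q, pi q s * vq q * P q) / (∑ q, pi q s * P q)

/-- probability mass of keyword `s`. -/
def mass (P : Q → ℝ) (pi : Q → S → ℝ) (s : S) : ℝ := ∑ q, pi q s * P q

/-- expected utility of advertiser `i` in PBM-GSP. -/
def util {n : ℕ} (P : Q → ℝ) (pi : Q → S → ℝ) (w : ℕ → ℝ)
    (v : Fin n → Q → ℝ) (b : Fin n → S → ℝ) (i : Fin n) : ℝ :=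
  ∑ q, P q * ∑ s, pi q s *
    (slotW w (fun j => b j s) i * (v i q - pay (fun j => b j s) i))

/-- social welfare of bid profile `b` in PBM-GSP. -/
def SW {n : ℕ} (P : Q → ℝ) (pi : Q → S → ℝ) (w : ℕ → ℝ)
    (v : Fin n → Q → ℝ) (b : Fin n → S → ℝ) : ℝ :=
  ∑ q, P q * ∑ s, pi q s * ∑ i, slotW w (fun j => b j s) i * v i q

/-- optimal social welfare. -/
def SWopt {n : ℕ} (P : Q → ℝ) (w : ℕ → ℝ) (v : Fin n → Q → ℝ) : ℝ :=
  ∑ q, P q * ∑ i, w (rankAll (fun j => v j q) i) * v i q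

/-- welfare of the truthful keyword-bid profile `𝔳` (each advertiser bids his
expected keyword value on every keyword, no `κ` constraint). -/
def SWtruth {n : ℕ} (P : Q → ℝ) (pi : Q → S → ℝ) (w : ℕ → ℝ)
    (v : Fin n → Q → ℝ) : ℝ :=
  ∑ q, P q * ∑ s, pi q s *
    ∑ i, w (rankAll (fun j => kwVal P pi (v j) s) i) * kwVal P pi (v i) s

/-- a bid vector is valid if it is nonnegative and positive on at most `κ` keywords. -/
def ValidBid (κ : ℕ) (bi : S → ℝ) : Prop :=
  (∀ s, 0 ≤ bi s) ∧ ((Finset.univ.filter fun s => 0 < bi s).card ≤ κ)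

/-- a bid profile is conservative if everybody bids at most his expected keyword value. -/
def Conservative {n : ℕ} (P : Q → ℝ) (pi : Q → S → ℝ)
    (v : Fin n → Q → ℝ) (b : Fin n → S → ℝ) : Prop :=
  ∀ i s, b i s ≤ kwVal P pi (v i) s

/-- `β`-keyword-level expressiveness for valuation profile `v`. -/
def KLExpressive {n : ℕ} (pi : Q → S → ℝ) (v : Fin n → Q → ℝ) (κ : ℕ) (β : ℝ) : Prop :=
  ∀ i : Fin n,
    β * ((Finset.univ.filter fun s : S => ∃ q, 0 < pi q s ∧ 0 < v i q).card : ℝ) ≤ (κ : ℝ)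

/-- expected utility of advertiser `i` in PBM-GSP with reserve price vector `r`. -/
def utilR {n : ℕ} (P : Q → ℝ) (pi : Q → S → ℝ) (w : ℕ → ℝ) (r : S → ℝ)
    (v : Fin n → Q → ℝ) (b : Fin n → S → ℝ) (i : Fin n) : ℝ :=
  ∑ q, P q * ∑ s, pi q s *
    (if 0 < b i s ∧ r s ≤ b i s then
       w (rank (fun j => b j s) i) * (v i q - max (r s) (pay (fun j => b j s) i))
     else 0)

/-- revenue of PBM-GSP with reserve price vector `r`. -/
def revenue {n : ℕ} (P : Q → ℝ) (pi : Q → S → ℝ) (w : ℕ → ℝ) (r : S → ℝ)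
    (b : Fin n → S → ℝ) : ℝ :=
  ∑ q, P q * ∑ s, pi q s * ∑ i,
    (if 0 < b i s ∧ r s ≤ b i s then
       w (rank (fun j => b j s) i) * max (r s) (pay (fun j => b j s) i)
     else 0)

/-- reserve-restricted social welfare of PBM-GSP with reserve price vector `r`. -/
def SWres {n : ℕ} (P : Q → ℝ) (pi : Q → S → ℝ) (w : ℕ → ℝ) (r : S → ℝ)
    (v : Fin n → Q → ℝ) (b : Fin n → S → ℝ) : ℝ :=
  ∑ q, P q * ∑ s, pi q s * ∑ i,
    (if 0 < b i s ∧ r s ≤ b i s then w (rank (fun j => b j s) i) * v i q else 0)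

/-- marginal CDF on keyword `s` of a distribution `T` of keyword-valuation vectors. -/
def cdfT (T : Measure (S → ℝ)) (s : S) (x : ℝ) : ℝ :=
  ((T.map fun f => f s) (Set.Iic x)).toReal

/-- the virtual value function `φ_s(x) = x - (1 - T_s(x))/t_s(x)`. -/
def virt (T : Measure (S → ℝ)) (td : S → ℝ → ℝ) (s : S) (x : ℝ) : ℝ :=
  x - (1 - cdfT T s x) / td s x

/-- `td s` is the density of the marginal of `T` on keyword `s`. -/
def HasDensity (T : Measure (S → ℝ)) (td : S → ℝ → ℝ) : Prop :=
  ∀ s : S, T.map (fun f => f s)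
    = MeasureTheory.volume.withDensity (fun x => ENNReal.ofReal (td s x))

/-- `r` is the vector of Myerson reserve prices. -/
def MyersonReserve (T : Measure (S → ℝ)) (td : S → ℝ → ℝ) (r : S → ℝ) : Prop :=
  ∀ s : S, 0 ≤ r s ∧ virt T td s (r s) = 0

/-- `T` is an MHR distribution with bounded derivative `η`. -/
def MHRBounded (T : Measure (S → ℝ)) (td : S → ℝ → ℝ) (r : S → ℝ) (η : ℝ) : Prop :=
  ∀ s : S, (∀ x : ℝ, 0 ≤ x → DifferentiableAt ℝ (virt T td s) x) ∧
    (∀ x : ℝ, 0 ≤ x → 1 ≤ deriv (virt T td s) x) ∧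
    (∀ x : ℝ, r s ≤ x → deriv (virt T td s) x ≤ η)

/-- `T` has a monotone hazard rate. -/
def MHRhazard (T : Measure (S → ℝ)) (td : S → ℝ → ℝ) : Prop :=
  ∀ s : S, MonotoneOn (fun x => td s x / (1 - cdfT T s x))
    {x : ℝ | 0 ≤ x ∧ cdfT T s x < 1}

/-- expected revenue (per valuation profile) of PBM-VCG with reserve prices, via
Myerson's lemma: virtual-value surplus of the welfare-maximizing allocation. -/
def revVCG {n : ℕ} (P : Q → ℝ) (pi : Q → S → ℝ) (w : ℕ → ℝ)
    (T : Measure (S → ℝ)) (td : S → ℝ → ℝ) (v : Fin n → Q → ℝ) : ℝ :=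
  ∑ s, mass P pi s * ∑ i, w (rankAll (fun j => kwVal P pi (v j) s) i) *
    (if 0 < virt T td s (kwVal P pi (v i) s) then virt T td s (kwVal P pi (v i) s) else 0)

end PBM

/-!
Advertiser `i`'s utility splits into one single-keyword GSP auction per keyword, weighted by the
keyword's mass and played with the expected keyword values `kwVal`: the per-query payoff is affine
in the value, so averaging over queries replaces `v_i^q` by `v_i^s`. It therefore suffices to
show that in one GSP auction lowering an overbid `bs i > V` to `V` cannot hurt `i`. If nobody
overtakes `i`, every rank and `i`'s price are unchanged. Otherwise the overtaking bid is `≥ V` and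
was ranked below `i`, so `i` used to pay at least `V` per click, while after the change `i` pays at
most its own bid `V`.
-/

namespace PBM

variable {n : ℕ}

def key (bs : Fin n → ℝ) (j : Fin n) : Lex (ℝ × Fin n) := toLex (-bs j, j)

section Ranking

variable {bs : Fin n → ℝ} {i j k : Fin n}

theorem key_lt_key_iff : key bs j < key bs k ↔ bs k < bs j ∨ bs j = bs k ∧ j < k := by
  simp [key, Prod.Lex.toLex_lt_toLex]

theorem key_injective (bs : Fin n → ℝ) : Function.Injective (key bs) := fun j k h => by
  simpa [key] using congrArg (fun x => (ofLex x).2) h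

theorem le_of_key_le (h : key bs j ≤ key bs k) : bs k ≤ bs j := by
  rcases Prod.Lex.toLex_le_toLex.mp h with h | ⟨h, -⟩ <;> simp at h <;> linarith

theorem rank_eq_card_key (bs : Fin n → ℝ) (k : Fin n) :
    rank bs k = #{j | 0 < bs j ∧ key bs j < key bs k} := by
  simp only [rank, key_lt_key_iff]

theorem rank_lt_rank (hj : 0 < bs j) (h : key bs j < key bs k) : rank bs j < rank bs k := by
  rw [rank_eq_card_key, rank_eq_card_key]
  refine Finset.card_lt_card (Finset.ssubset_iff_of_subset ?_ |>.mpr ⟨j, ?_, ?_⟩)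
  · intro l
    simp only [Finset.mem_filter, Finset.mem_univ, true_and]
    exact fun hl => ⟨hl.1, hl.2.trans h⟩
  · simp [hj, h]
  · simp

theorem eq_of_rank_eq (hj : 0 < bs j) (hk : 0 < bs k) (h : rank bs j = rank bs k) : j = k := by
  by_contra hne
  rcases lt_or_gt_of_ne ((key_injective bs).ne hne) with hlt | hlt
  · exact (rank_lt_rank hj hlt).ne h
  · exact (rank_lt_rank hk hlt).ne h.symm

theorem pay_eq_of_rank_eq_succ (hj : 0 < bs j) (h : rank bs j = rank bs i + 1) :
    pay bs i = bs j := by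
  have : ({k | 0 < bs k ∧ rank bs k = rank bs i + 1} : Finset (Fin n)) = {j} := by
    ext k
    simp only [Finset.mem_filter, Finset.mem_univ, true_and, Finset.mem_singleton]
    refine ⟨fun hk => eq_of_rank_eq hk.1 hj (hk.2.trans h.symm), ?_⟩
    rintro rfl
    exact ⟨hj, h⟩
  rw [pay, this, Finset.sum_singleton]

theorem pay_le_self (hi : 0 ≤ bs i) : pay bs i ≤ bs i := by
  by_cases h : ∃ j, 0 < bs j ∧ rank bs j = rank bs i + 1
  · obtain ⟨j, hj, hrank⟩ := h
    rw [pay_eq_of_rank_eq_succ hj hrank]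
    refine le_of_key_le (le_of_not_gt fun hji => ?_)
    exact absurd (rank_lt_rank hj hji) (by omega)
  · push Not at h
    have hempty : ({j | 0 < bs j ∧ rank bs j = rank bs i + 1} : Finset (Fin n)) = ∅ :=
      Finset.filter_eq_empty_iff.mpr fun j _ hj => h j hj.1 hj.2
    rwa [pay, hempty, Finset.sum_empty]

theorem le_pay_of_key_lt (hj : 0 < bs j) (hij : key bs i < key bs j) : bs j ≤ pay bs i := by
  obtain ⟨m, hmB, hmin⟩ := Finset.exists_min_image
    (Finset.univ.filter fun k => 0 < bs k ∧ key bs i < key bs k) (key bs) ⟨j, by simp [hj, hij]⟩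
  simp only [Finset.mem_filter, Finset.mem_univ, true_and, and_imp] at hmB hmin
  obtain ⟨hm, him⟩ := hmB
  have hi : 0 < bs i := hj.trans_le (le_of_key_le hij.le)
  have hrank : rank bs m = rank bs i + 1 := by
    have : (Finset.univ.filter fun k => 0 < bs k ∧ key bs k < key bs m) =
        insert i (Finset.univ.filter fun k => 0 < bs k ∧ key bs k < key bs i) := by
      ext k
      simp only [Finset.mem_insert, Finset.mem_filter, Finset.mem_univ, true_and]
      constructor
      · rintro ⟨hk, hkm⟩
        rcases lt_trichotomy (key bs k) (key bs i) with hki | hki | hki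
        · exact Or.inr ⟨hk, hki⟩
        · exact Or.inl (key_injective bs hki)
        · exact absurd (hmin k hk hki) (not_le.mpr hkm)
      · rintro (rfl | ⟨hk, hki⟩)
        · exact ⟨hi, him⟩
        · exact ⟨hk, hki.trans him⟩
    rw [rank_eq_card_key, rank_eq_card_key, this, Finset.card_insert_of_notMem (by simp)]
  rw [pay_eq_of_rank_eq_succ hm hrank]
  exact le_of_key_le (hmin j hj hij)

theorem key_update_of_ne {V : ℝ} (h : j ≠ i) : key (Function.update bs i V) j = key bs j := by
  simp [key, Function.update_of_ne h]

theorem rank_update_eq {V : ℝ} (hV : 0 < V) (hlt : V < bs i)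
    (hno_overtake : ∀ j, key bs i < key bs j → ¬ key bs j < key (Function.update bs i V) i)
    (k : Fin n) : rank (Function.update bs i V) k = rank bs k := by
  have hi : key bs i < key (Function.update bs i V) i := by
    simp [key, Prod.Lex.toLex_lt_toLex, hlt]
  rw [rank_eq_card_key, rank_eq_card_key]
  congr 1
  refine Finset.filter_congr fun j _ => ?_
  obtain rfl | hij := eq_or_ne i j <;> obtain rfl | hik := eq_or_ne i k
  · simp
  · rw [key_update_of_ne hik.symm, Function.update_self]
    refine ⟨fun h => ⟨hV.trans hlt, hi.trans h.2⟩, fun h => ⟨hV, ?_⟩⟩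
    refine lt_of_le_of_ne (not_lt.mp (hno_overtake k h.2)) fun hk => hik ?_
    exact key_injective _ (hk.trans (key_update_of_ne hik.symm).symm)
  · rw [key_update_of_ne hij.symm, Function.update_of_ne hij.symm]
    refine and_congr_right fun _ => ⟨fun h => ?_, hi.trans'⟩
    refine lt_of_le_of_ne (not_lt.mp fun hji => hno_overtake j hji h) fun hji => hij ?_
    exact key_injective bs hji.symm
  · rw [key_update_of_ne hij.symm, key_update_of_ne hik.symm, Function.update_of_ne hij.symm]

theorem pay_update_eq {V : ℝ}
    (hrank : ∀ k, rank (Function.update bs i V) k = rank bs k) :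
    pay (Function.update bs i V) i = pay bs i := by
  have hfilter : (Finset.univ.filter fun j =>
        0 < Function.update bs i V j ∧ rank (Function.update bs i V) j =
          rank (Function.update bs i V) i + 1) =
      Finset.univ.filter fun j => 0 < bs j ∧ rank bs j = rank bs i + 1 := by
    refine Finset.filter_congr fun j _ => ?_
    obtain rfl | hij := eq_or_ne i j
    · simp [hrank]
    · rw [Function.update_of_ne hij.symm, hrank, hrank]
  rw [pay, pay, hfilter]
  refine Finset.sum_congr rfl fun j hj => Function.update_of_ne ?_ _ _
  rintro rfl
  simp at hj

theorem pay_nonneg (bs : Fin n → ℝ) (i : Fin n) : 0 ≤ pay bs i :=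
  Finset.sum_nonneg fun _ hj => (Finset.mem_filter.mp hj).2.1.le

theorem slotW_nonneg {w : ℕ → ℝ} (hw0 : ∀ k, 0 ≤ w k) (bs : Fin n → ℝ) (i : Fin n) :
    0 ≤ slotW w bs i := by
  unfold slotW
  split_ifs
  exacts [hw0 _, le_rfl]

theorem gspUtil_le_gspUtil_update_of_lt {w : ℕ → ℝ} (hw0 : ∀ k, 0 ≤ w k) {vv : Fin n → ℝ}
    (hlt : vv i < bs i) : gspUtil w vv bs i ≤ gspUtil w vv (Function.update bs i (vv i)) i := by
  unfold gspUtil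
  set bs' := Function.update bs i (vv i)
  rcases le_or_gt (vv i) 0 with hV | hV
  · have hout : slotW w bs' i = 0 := by simp [bs', slotW, hV.not_gt]
    rw [hout, zero_mul]
    exact mul_nonpos_of_nonneg_of_nonpos (slotW_nonneg hw0 bs i)
      (by linarith [pay_nonneg bs i])
  by_cases hno_overtake : ∀ j, key bs i < key bs j → ¬ key bs j < key bs' i
  · have hrank := rank_update_eq hV hlt hno_overtake
    simp only [slotW, bs', Function.update_self, hrank, pay_update_eq hrank, hV, hV.trans hlt,
      if_true, le_refl]
  push Not at hno_overtake
  obtain ⟨j, hij, hji⟩ := hno_overtake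
  have hji_ne : j ≠ i := by
    rintro rfl
    exact lt_irrefl _ hij
  have hVj : vv i ≤ bs j := by
    rw [← key_update_of_ne hji_ne] at hji
    simpa [bs', Function.update_of_ne hji_ne] using le_of_key_le hji.le
  have hlose : slotW w bs i * (vv i - pay bs i) ≤ 0 :=
    mul_nonpos_of_nonneg_of_nonpos (slotW_nonneg hw0 bs i)
      (sub_nonpos.mpr (hVj.trans (le_pay_of_key_lt (hV.trans_le hVj) hij)))
  have hgain : 0 ≤ slotW w bs' i * (vv i - pay bs' i) := by
    refine mul_nonneg (slotW_nonneg hw0 bs' i) (sub_nonneg.mpr ?_)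
    simpa [bs'] using pay_le_self (bs := bs') (i := i) (by simpa [bs'] using hV.le)
  exact hlose.trans hgain

end Ranking

section Keywords

variable {Q S : Type*} [Fintype Q] {P : Q → ℝ} {pi : Q → S → ℝ}

theorem mass_nonneg (hP0 : ∀ q, 0 ≤ P q) (hpi0 : ∀ q s, 0 ≤ pi q s) (s : S) :
    0 ≤ mass P pi s :=
  Finset.sum_nonneg fun q _ => mul_nonneg (hpi0 q s) (hP0 q)

theorem mass_mul_kwVal (hP0 : ∀ q, 0 ≤ P q) (hpi0 : ∀ q s, 0 ≤ pi q s) (vq : Q → ℝ) (s : S) :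
    mass P pi s * kwVal P pi vq s = ∑ q, pi q s * vq q * P q := by
  rcases (mass_nonneg hP0 hpi0 s).eq_or_lt with h | h
  · have hzero : ∀ q, pi q s * P q = 0 := fun q =>
      (Finset.sum_eq_zero_iff_of_nonneg fun q _ => mul_nonneg (hpi0 q s) (hP0 q)).mp h.symm q
        (Finset.mem_univ q)
    rw [← h, zero_mul]
    exact (Finset.sum_eq_zero fun q _ => by rw [mul_right_comm, hzero, zero_mul]).symm
  · exact mul_div_cancel₀ _ h.ne'

theorem sum_mul_affine_eq_mass_mul_kwVal (hP0 : ∀ q, 0 ≤ P q) (hpi0 : ∀ q s, 0 ≤ pi q s)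
    (vq : Q → ℝ) (s : S) (a p : ℝ) :
    ∑ q, P q * (pi q s * (a * (vq q - p))) = mass P pi s * (a * (kwVal P pi vq s - p)) := by
  have h := mass_mul_kwVal hP0 hpi0 vq s
  unfold mass at h ⊢
  calc ∑ q, P q * (pi q s * (a * (vq q - p)))
      = a * ∑ q, pi q s * vq q * P q - a * p * ∑ q, pi q s * P q := by
        rw [Finset.mul_sum, Finset.mul_sum, ← Finset.sum_sub_distrib]
        exact Finset.sum_congr rfl fun q _ => by ring
    _ = _ := by rw [← h]; ring

theorem util_eq_sum_mass_mul_gspUtil [Fintype S] (hP0 : ∀ q, 0 ≤ P q) (hpi0 : ∀ q s, 0 ≤ pi q s)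
    (w : ℕ → ℝ) (v : Fin n → Q → ℝ) (b : Fin n → S → ℝ) (i : Fin n) :
    util P pi w v b i =
      ∑ s, mass P pi s * gspUtil w (fun j => kwVal P pi (v j) s) (fun j => b j s) i := by
  unfold util gspUtil
  simp_rw [Finset.mul_sum]
  rw [Finset.sum_comm]
  exact Finset.sum_congr rfl fun s _ => sum_mul_affine_eq_mass_mul_kwVal hP0 hpi0 _ s _ _

end Keywords

end PBM

open PBM in
theorem stmt0_general
    {Q S : Type*} [Fintype Q] [Fintype S] [DecidableEq S] {n : ℕ}
    (P : Q → ℝ) (pi : Q → S → ℝ) (w : ℕ → ℝ)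
    (hP0 : ∀ q, 0 ≤ P q)
    (hpi0 : ∀ q s, 0 ≤ pi q s)
    (hw0 : ∀ k, 0 ≤ w k)
    (v : Fin n → Q → ℝ)
    (b : Fin n → S → ℝ)
    (i : Fin n) (s : S)
    (hover : kwVal P pi (v i) s < b i s) :
    util P pi w v b i ≤
      util P pi w v
        (Function.update b i (Function.update (b i) s (kwVal P pi (v i) s))) i := by
  rw [util_eq_sum_mass_mul_gspUtil hP0 hpi0, util_eq_sum_mass_mul_gspUtil hP0 hpi0]
  refine Finset.sum_le_sum fun t _ => mul_le_mul_of_nonneg_left ?_ (mass_nonneg hP0 hpi0 t)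
  simp_rw [Function.apply_update (fun (_ : Fin n) (bj : S → ℝ) => bj t)]
  obtain rfl | hts := eq_or_ne s t
  · simpa using gspUtil_le_gspUtil_update_of_lt hw0 hover
  · simp [Function.update_of_ne hts.symm]

open PBM in
/-- in PBM-GSP, bidding strictly above the expected keyword value
`v_i^s` on a keyword `s` is weakly dominated by bidding exactly `v_i^s` there. -/
theorem stmt0
    {Q S : Type*} [Fintype Q] [Fintype S] [DecidableEq S] {n : ℕ}
    (P : Q → ℝ) (pi : Q → S → ℝ) (w : ℕ → ℝ) (κ : ℕ)
    (hP0 : ∀ q, 0 ≤ P q) (hP1 : ∑ q, P q = 1)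
    (hpi0 : ∀ q s, 0 ≤ pi q s) (hpi1 : ∀ q, ∑ s, pi q s = 1)
    (hS : ∀ s : S, ∃ q, 0 < pi q s)
    (hw : Antitone w) (hw0 : ∀ k, 0 ≤ w k) (hκ : 0 < κ)
    (v : Fin n → Q → ℝ) (hv0 : ∀ i q, 0 ≤ v i q)
    (b : Fin n → S → ℝ) (hb : ∀ j, ValidBid κ (b j))
    (i : Fin n) (s : S)
    (hover : kwVal P pi (v i) s < b i s) :
    util P pi w v b i ≤
      util P pi w v
        (Function.update b i (Function.update (b i) s (kwVal P pi (v i) s))) i :=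
  stmt0_general P pi w hP0 hpi0 hw0 v b i s hover
end
end

section
/- If an n-player game of incomplete information is (λ,μ)-semi-smooth with λ > 0 and μ ≥ 0, and its social welfare function satisfies SW(b; v) ≥ Σ_i u_i(b; v) for all pure strategy profiles b and all type vectors v, then for every Bayes-Nash equilibrium b(·), E_v[SW(OPT(v))] ≤ ((μ+1)/λ) · E_{v, b(v)}[SW(b(v); v)]; that is, the Bayes-Nash price of anarchy is at most (μ+1)/λ. -/
open Finset MeasureTheory

noncomputable section

namespace PBM

attribute [local instance] Classical.propDecidable

variable {Q S : Type*} [Fintype Q] [Fintype S]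

end PBM

/-! Integrate the semi-smoothness inequality at the equilibrium profile. By Fubini, player `i`'s
randomized deviation is an average over seeds `θ` of the pure deviations `vᵢ ↦ dev i vᵢ θ`, none of
which is profitable at a Bayes-Nash equilibrium. Hence `λ E[OPT] - μ E[SW] ≤ Σᵢ E[uᵢ] ≤ E[SW]`. -/

section Integration

variable {Ω Θ ι : Type*} [MeasurableSpace Ω] [MeasurableSpace Θ] {μ : Measure Ω} {ν : Measure Θ}

theorem integral_integral_le_of_forall_integral_le [SFinite μ] [IsProbabilityMeasure ν]
    {f : Ω → Θ → ℝ} (hf : Integrable (Function.uncurry f) (μ.prod ν)) {c : ℝ}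
    (h : ∀ θ, ∫ ω, f ω θ ∂μ ≤ c) :
    ∫ ω, ∫ θ, f ω θ ∂ν ∂μ ≤ c := by
  rw [integral_integral_swap hf]
  calc ∫ θ, ∫ ω, f ω θ ∂μ ∂ν ≤ ∫ _θ, c ∂ν :=
        integral_mono hf.integral_prod_right (integrable_const c) h
    _ = c := by simp

theorem mul_integral_sub_mul_integral_le_sum_integral {s : Finset ι} {X Y : Ω → ℝ}
    {Z : ι → Ω → ℝ} (hX : Integrable X μ) (hY : Integrable Y μ)
    (hZ : ∀ i ∈ s, Integrable (Z i) μ) (a b : ℝ) (h : ∀ ω, a * X ω - b * Y ω ≤ ∑ i ∈ s, Z i ω) :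
    a * ∫ ω, X ω ∂μ - b * ∫ ω, Y ω ∂μ ≤ ∑ i ∈ s, ∫ ω, Z i ω ∂μ := by
  rw [← integral_const_mul, ← integral_const_mul, ← integral_sub (hX.const_mul a) (hY.const_mul b),
    ← integral_finsetSum s hZ]
  exact integral_mono ((hX.const_mul a).sub (hY.const_mul b)) (integrable_finsetSum s hZ) h

theorem sum_integral_le_integral_of_sum_le {s : Finset ι} {Y : Ω → ℝ} {Z : ι → Ω → ℝ}
    (hY : Integrable Y μ) (hZ : ∀ i ∈ s, Integrable (Z i) μ) (h : ∀ ω, ∑ i ∈ s, Z i ω ≤ Y ω) :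
    ∑ i ∈ s, ∫ ω, Z i ω ∂μ ≤ ∫ ω, Y ω ∂μ := by
  rw [← integral_finsetSum s hZ]
  exact integral_mono (integrable_finsetSum s hZ) hY h

end Integration

theorem le_div_mul_of_mul_sub_mul_le {lam mu opt sw : ℝ} (hlam : 0 < lam)
    (h : lam * opt - mu * sw ≤ sw) : opt ≤ (mu + 1) / lam * sw := by
  rw [div_mul_eq_mul_div, le_div_iff₀ hlam]
  linarith

theorem stmt2_general
    {V B : Type*} {n : ℕ}
    (u : (Fin n → B) → (Fin n → V) → Fin n → ℝ)
    (SW : (Fin n → B) → (Fin n → V) → ℝ)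
    (SWopt : (Fin n → V) → ℝ)
    (lam mu : ℝ) (hlam : 0 < lam)
    (hSWge : ∀ b v, ∑ i, u b v i ≤ SW b v)
    -- semi-smoothness witness
    {Θ : Type*} [MeasurableSpace Θ] (ν : MeasureTheory.Measure Θ)
    [MeasureTheory.IsProbabilityMeasure ν]
    (dev : Fin n → V → Θ → B)
    (hsmooth : ∀ (b : Fin n → B) (v : Fin n → V),
      lam * SWopt v - mu * SW b v
        ≤ ∑ i, ∫ θ, u (Function.update b i (dev i (v i) θ)) v i ∂ν)
    -- a Bayes-Nash equilibrium: joint distribution of types and bids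
    {Ω : Type*} [MeasurableSpace Ω] (μ : MeasureTheory.Measure Ω)
    [MeasureTheory.IsProbabilityMeasure μ]
    (Vf : Ω → Fin n → V) (Bf : Ω → Fin n → B)
    (hBNE : ∀ (i : Fin n) (dv : V → B),
      ∫ ω, u (Function.update (Bf ω) i (dv (Vf ω i))) (Vf ω) i ∂μ
        ≤ ∫ ω, u (Bf ω) (Vf ω) i ∂μ)
    -- integrability
    (hIntOpt : MeasureTheory.Integrable (fun ω => SWopt (Vf ω)) μ)
    (hIntSW : MeasureTheory.Integrable (fun ω => SW (Bf ω) (Vf ω)) μ)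
    (hIntU : ∀ i, MeasureTheory.Integrable (fun ω => u (Bf ω) (Vf ω) i) μ)
    (hIntProd : ∀ i : Fin n,
      MeasureTheory.Integrable
        (fun p : Ω × Θ =>
          u (Function.update (Bf p.1) i (dev i (Vf p.1 i) p.2)) (Vf p.1) i)
        (μ.prod ν)) :
    ∫ ω, SWopt (Vf ω) ∂μ ≤ ((mu + 1) / lam) * ∫ ω, SW (Bf ω) (Vf ω) ∂μ := by
  set devU : Fin n → Ω → Θ → ℝ := fun i ω θ =>
    u (Function.update (Bf ω) i (dev i (Vf ω i) θ)) (Vf ω) i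
  have hIntDev : ∀ i ∈ Finset.univ, Integrable (fun ω => ∫ θ, devU i ω θ ∂ν) μ :=
    fun i _ => (hIntProd i).integral_prod_left
  have hsmoothE : lam * ∫ ω, SWopt (Vf ω) ∂μ - mu * ∫ ω, SW (Bf ω) (Vf ω) ∂μ
      ≤ ∑ i, ∫ ω, ∫ θ, devU i ω θ ∂ν ∂μ :=
    mul_integral_sub_mul_integral_le_sum_integral hIntOpt hIntSW hIntDev lam mu
      fun ω => hsmooth (Bf ω) (Vf ω)
  have hdevE : ∀ i ∈ Finset.univ,
      ∫ ω, ∫ θ, devU i ω θ ∂ν ∂μ ≤ ∫ ω, u (Bf ω) (Vf ω) i ∂μ := fun i _ =>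
    integral_integral_le_of_forall_integral_le (hIntProd i) fun θ => hBNE i fun vi => dev i vi θ
  have hutilE : ∑ i, ∫ ω, u (Bf ω) (Vf ω) i ∂μ ≤ ∫ ω, SW (Bf ω) (Vf ω) ∂μ :=
    sum_integral_le_integral_of_sum_le hIntSW (fun i _ => hIntU i) fun ω => hSWge (Bf ω) (Vf ω)
  exact le_div_mul_of_mul_sub_mul_le hlam
    ((hsmoothE.trans (Finset.sum_le_sum hdevE)).trans hutilE)

/-- if an `n`-player game of incomplete information is
`(λ,μ)`-semi-smooth (witnessed by randomized strategies `dev i (v i)` driven by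
a seed `θ ∼ ν`) and its social welfare dominates the sum of utilities, then for
every Bayes-Nash equilibrium the expected optimal welfare is at most
`(μ+1)/λ` times the expected equilibrium welfare. -/
theorem stmt2
    {V B : Type*} [MeasurableSpace V] [MeasurableSpace B] {n : ℕ}
    (u : (Fin n → B) → (Fin n → V) → Fin n → ℝ)
    (SW : (Fin n → B) → (Fin n → V) → ℝ)
    (SWopt : (Fin n → V) → ℝ)
    (lam mu : ℝ) (hlam : 0 < lam) (hmu : 0 ≤ mu)
    (hOPT0 : ∀ v, 0 ≤ SWopt v)
    (hSWge : ∀ b v, ∑ i, u b v i ≤ SW b v)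
    -- semi-smoothness witness
    {Θ : Type*} [MeasurableSpace Θ] (ν : MeasureTheory.Measure Θ)
    [MeasureTheory.IsProbabilityMeasure ν]
    (dev : Fin n → V → Θ → B)
    (hsmooth : ∀ (b : Fin n → B) (v : Fin n → V),
      lam * SWopt v - mu * SW b v
        ≤ ∑ i, ∫ θ, u (Function.update b i (dev i (v i) θ)) v i ∂ν)
    -- a Bayes-Nash equilibrium: joint distribution of types and bids
    {Ω : Type*} [MeasurableSpace Ω] (μ : MeasureTheory.Measure Ω)
    [MeasureTheory.IsProbabilityMeasure μ]
    (Vf : Ω → Fin n → V) (Bf : Ω → Fin n → B)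
    (hBNE : ∀ (i : Fin n) (dv : V → B),
      ∫ ω, u (Function.update (Bf ω) i (dv (Vf ω i))) (Vf ω) i ∂μ
        ≤ ∫ ω, u (Bf ω) (Vf ω) i ∂μ)
    -- integrability
    (hIntOpt : MeasureTheory.Integrable (fun ω => SWopt (Vf ω)) μ)
    (hIntSW : MeasureTheory.Integrable (fun ω => SW (Bf ω) (Vf ω)) μ)
    (hIntU : ∀ i, MeasureTheory.Integrable (fun ω => u (Bf ω) (Vf ω) i) μ)
    (hIntProd : ∀ i : Fin n,
      MeasureTheory.Integrable
        (fun p : Ω × Θ =>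
          u (Function.update (Bf p.1) i (dev i (Vf p.1 i) p.2)) (Vf p.1) i)
        (μ.prod ν)) :
    ∫ ω, SWopt (Vf ω) ∂μ ≤ ((mu + 1) / lam) * ∫ ω, SW (Bf ω) (Vf ω) ∂μ :=
  stmt2_general u SW SWopt lam mu hlam hSWge ν dev hsmooth μ Vf Bf hBNE hIntOpt hIntSW hIntU
    hIntProd
end
end

section
/- If the auction system is c-expected-homogeneous, then E_v[SW(OPT(v))] ≤ c · E_v[SW(𝔳)], where 𝔳 is the truthful keyword-bid profile; that is, the expected optimal social welfare is at most c times the expected welfare of the allocation that ranks advertisers on every keyword by their expected keyword values. -/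
open Finset MeasureTheory

noncomputable section

namespace PBM

attribute [local instance] Classical.propDecidable

variable {Q S : Type*} [Fintype Q] [Fintype S]

end PBM

/-!
Let `m` be the mean valuation profile. Homogeneity bounds every realised value `v_i^q` by `c`
times the expected keyword value of `m` on any keyword adjacent to `q`; since the sorted welfare
`∑ w_k x_[k]` is monotone, this gives `SW(OPT(v)) ≤ c · SWtruth(m)` almost surely. Conversely,
ranking every keyword by the keyword values of `m` but valuing the outcome at the realised `v` is
linear in `v`, lies below `SWtruth(v)` by the rearrangement inequality and equals `SWtruth(m)`
at `v = m`; taking expectations gives `SWtruth(m) ≤ E[SWtruth(v)]`.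
-/

namespace PBM

section Ranking

variable {n : ℕ}

def rankKey (x : Fin n → ℝ) (i : Fin n) : Lex (ℝᵒᵈ × Fin n) :=
  toLex (OrderDual.toDual (x i), i)

lemma rankKey_injective (x : Fin n → ℝ) : Function.Injective (rankKey x) := by
  intro i j h
  simpa [rankKey] using congrArg (fun k => (ofLex k).2) h

lemma rankAll_eq_card (x : Fin n → ℝ) (i : Fin n) :
    rankAll x i = #{j | rankKey x j < rankKey x i} := by
  unfold rankAll rankKey
  congr 1
  ext j
  simp [Prod.Lex.toLex_lt_toLex]

lemma rankAll_lt_rankAll {x : Fin n → ℝ} {i j : Fin n} (h : rankKey x j < rankKey x i) :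
    rankAll x j < rankAll x i := by
  rw [rankAll_eq_card, rankAll_eq_card]
  refine Finset.card_lt_card ⟨fun k hk => ?_, fun hsub => ?_⟩
  · simp only [Finset.mem_filter, Finset.mem_univ, true_and] at hk ⊢
    exact hk.trans h
  · simpa using hsub (by simpa using h : j ∈ _)

lemma rankAll_injective (x : Fin n → ℝ) : Function.Injective (rankAll x) := by
  intro i j hij
  by_contra hne
  rcases lt_or_gt_of_ne ((rankKey_injective x).ne hne) with h | h
  · exact (rankAll_lt_rankAll h).ne hij
  · exact (rankAll_lt_rankAll h).ne' hij

lemma rankAll_lt (x : Fin n → ℝ) (i : Fin n) : rankAll x i < n := by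
  rw [rankAll_eq_card]
  simpa using Finset.card_lt_card <|
    Finset.filter_ssubset.2 ⟨i, Finset.mem_univ i, lt_irrefl (rankKey x i)⟩

def rankPerm (x : Fin n → ℝ) : Equiv.Perm (Fin n) :=
  Equiv.ofBijective (fun i => ⟨rankAll x i, rankAll_lt x i⟩) <|
    Finite.injective_iff_bijective.1 fun _ _ h => rankAll_injective x (Fin.mk.inj h)

lemma monovary_rankAll {w : ℕ → ℝ} (hw : Antitone w) (x : Fin n → ℝ) :
    Monovary (fun i => w (rankAll x i)) x := fun _ _ h =>
  hw (rankAll_lt_rankAll (Prod.Lex.toLex_lt_toLex.2 (Or.inl h))).le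

def sortedWelfare (w : ℕ → ℝ) (x : Fin n → ℝ) : ℝ := ∑ i, w (rankAll x i) * x i

lemma sum_rankAll_mul_le_sortedWelfare {w : ℕ → ℝ} (hw : Antitone w) (x y : Fin n → ℝ) :
    ∑ i, w (rankAll y i) * x i ≤ sortedWelfare w x := by
  have hσ : ∀ i, rankAll y i = rankAll x (((rankPerm x)⁻¹ * rankPerm y) i) := fun i =>
    congrArg Fin.val ((rankPerm x).apply_symm_apply (rankPerm y i)).symm
  simp_rw [hσ]
  exact (monovary_rankAll hw x).sum_comp_perm_mul_le_sum_mul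

lemma sortedWelfare_le_mul {w : ℕ → ℝ} (hw : Antitone w) (hw0 : ∀ k, 0 ≤ w k) {c : ℝ}
    (hc : 0 ≤ c) {x y : Fin n → ℝ} (hxy : ∀ i, x i ≤ c * y i) :
    sortedWelfare w x ≤ c * sortedWelfare w y :=
  calc sortedWelfare w x ≤ ∑ i, w (rankAll x i) * (c * y i) :=
        Finset.sum_le_sum fun i _ => mul_le_mul_of_nonneg_left (hxy i) (hw0 _)
    _ = c * ∑ i, w (rankAll x i) * y i := by
        rw [Finset.mul_sum]; exact Finset.sum_congr rfl fun i _ => by ring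
    _ ≤ c * sortedWelfare w y :=
        mul_le_mul_of_nonneg_left (sum_rankAll_mul_le_sortedWelfare hw y x) hc

end Ranking

section Keyword

variable {Q S : Type*} [Fintype Q] {n : ℕ}

def rankedWelfare [Fintype S] (P : Q → ℝ) (pi : Q → S → ℝ) (w : ℕ → ℝ)
    (m v : Fin n → Q → ℝ) : ℝ :=
  ∑ q, P q * ∑ s, pi q s *
    ∑ i, w (rankAll (fun j => kwVal P pi (m j) s) i) * kwVal P pi (v i) s

lemma rankedWelfare_le_SWtruth [Fintype S] {P : Q → ℝ} {pi : Q → S → ℝ} {w : ℕ → ℝ}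
    (hP0 : ∀ q, 0 ≤ P q) (hpi0 : ∀ q s, 0 ≤ pi q s) (hw : Antitone w)
    (m v : Fin n → Q → ℝ) : rankedWelfare P pi w m v ≤ SWtruth P pi w v :=
  Finset.sum_le_sum fun q _ => mul_le_mul_of_nonneg_left (Finset.sum_le_sum fun s _ =>
    mul_le_mul_of_nonneg_left (sum_rankAll_mul_le_sortedWelfare hw _ _) (hpi0 q s)) (hP0 q)

lemma le_mul_kwVal {P : Q → ℝ} {pi : Q → S → ℝ} (hP0 : ∀ q, 0 ≤ P q)
    (hpi0 : ∀ q s, 0 ≤ pi q s) {s : S} (hs : 0 < mass P pi s) {a c : ℝ} {vq : Q → ℝ}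
    (h : ∀ q, 0 < pi q s → a ≤ c * vq q) : a ≤ c * kwVal P pi vq s := by
  rw [mass] at hs
  rw [kwVal, ← mul_div_assoc, le_div_iff₀ hs, Finset.mul_sum, Finset.mul_sum]
  refine Finset.sum_le_sum fun q _ => ?_
  rcases (hpi0 q s).eq_or_lt with hq | hq
  · simp [← hq]
  · nlinarith [h q hq, mul_nonneg hq.le (hP0 q)]

lemma SWopt_le_mul_SWtruth [Fintype S] {P : Q → ℝ} {pi : Q → S → ℝ} {w : ℕ → ℝ}
    (hP0 : ∀ q, 0 ≤ P q) (hpi0 : ∀ q s, 0 ≤ pi q s) (hpi1 : ∀ q, ∑ s, pi q s = 1)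
    (hw : Antitone w) (hw0 : ∀ k, 0 ≤ w k) {c : ℝ} (hc : 0 ≤ c) {v m : Fin n → Q → ℝ}
    (h : ∀ i s q q', 0 < pi q s → 0 < pi q' s → v i q ≤ c * m i q') :
    SWopt P w v ≤ c * SWtruth P pi w m := by
  have hterm : ∀ q s, P q * (pi q s * sortedWelfare w (fun j => v j q)) ≤
      P q * (pi q s * (c * sortedWelfare w (fun j => kwVal P pi (m j) s))) := by
    intro q s
    -- on a keyword of mass `0`, `kwVal` is the junk value `0 / 0 = 0`, so such terms are set aside
    rcases (hP0 q).eq_or_lt with hPq | hPq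
    · simp [← hPq]
    rcases (hpi0 q s).eq_or_lt with hpiq | hpiq
    · simp [← hpiq]
    have hmass : 0 < mass P pi s :=
      (mul_pos hpiq hPq).trans_le <| Finset.single_le_sum (f := fun q => pi q s * P q)
        (fun q _ => mul_nonneg (hpi0 q s) (hP0 q)) (Finset.mem_univ q)
    gcongr
    exact sortedWelfare_le_mul hw hw0 hc fun i =>
      le_mul_kwVal hP0 hpi0 hmass fun q' hq' => h i s q q' hpiq hq'
  calc SWopt P w v = ∑ q, ∑ s, P q * (pi q s * sortedWelfare w (fun j => v j q)) := by
        simp_rw [← Finset.mul_sum, ← Finset.sum_mul, hpi1, one_mul]; rfl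
    _ ≤ ∑ q, ∑ s, P q * (pi q s * (c * sortedWelfare w (fun j => kwVal P pi (m j) s))) :=
        Finset.sum_le_sum fun q _ => Finset.sum_le_sum fun s _ => hterm q s
    _ = c * SWtruth P pi w m := by
        simp only [SWtruth, sortedWelfare, Finset.mul_sum]
        exact Finset.sum_congr rfl fun q _ => Finset.sum_congr rfl fun s _ =>
          Finset.sum_congr rfl fun i _ => by ring

section Expectation

variable {Ω : Type*} [MeasurableSpace Ω] {μ : Measure Ω}

lemma integrable_kwVal (P : Q → ℝ) (pi : Q → S → ℝ) {f : Ω → Q → ℝ}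
    (hf : ∀ q, Integrable (fun ω => f ω q) μ) (s : S) :
    Integrable (fun ω => kwVal P pi (f ω) s) μ := by
  unfold kwVal
  fun_prop

lemma integral_kwVal (P : Q → ℝ) (pi : Q → S → ℝ) {f : Ω → Q → ℝ}
    (hf : ∀ q, Integrable (fun ω => f ω q) μ) (s : S) :
    ∫ ω, kwVal P pi (f ω) s ∂μ = kwVal P pi (fun q => ∫ ω, f ω q ∂μ) s := by
  unfold kwVal
  rw [integral_div, integral_finsetSum _ fun q _ => ?_]
  · simp_rw [integral_mul_const, integral_const_mul]
  · fun_prop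

lemma integrable_rankedWelfare [Fintype S] (P : Q → ℝ) (pi : Q → S → ℝ) (w : ℕ → ℝ)
    (m : Fin n → Q → ℝ) {V : Ω → Fin n → Q → ℝ} (hV : ∀ i q, Integrable (fun ω => V ω i q) μ) :
    Integrable (fun ω => rankedWelfare P pi w m (V ω)) μ := by
  have := fun i s => integrable_kwVal P pi (hV i) s
  unfold rankedWelfare
  fun_prop

lemma integral_rankedWelfare [Fintype S] (P : Q → ℝ) (pi : Q → S → ℝ) (w : ℕ → ℝ)
    (m : Fin n → Q → ℝ) {V : Ω → Fin n → Q → ℝ}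
    (hV : ∀ i q, Integrable (fun ω => V ω i q) μ) :
    ∫ ω, rankedWelfare P pi w m (V ω) ∂μ =
      rankedWelfare P pi w m (fun i q => ∫ ω, V ω i q ∂μ) := by
  have := fun i s => integrable_kwVal P pi (hV i) s
  unfold rankedWelfare
  rw [integral_finsetSum _ fun q _ => by fun_prop]
  refine Finset.sum_congr rfl fun q _ => ?_
  rw [integral_const_mul, integral_finsetSum _ fun s _ => by fun_prop]
  refine congrArg _ (Finset.sum_congr rfl fun s _ => ?_)
  rw [integral_const_mul, integral_finsetSum _ fun i _ => by fun_prop]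
  refine congrArg _ (Finset.sum_congr rfl fun i _ => ?_)
  rw [integral_const_mul, integral_kwVal P pi (hV i)]

lemma integrable_of_ae_le_mul_integral [IsFiniteMeasure μ] {f : Ω → ℝ} (hf0 : 0 ≤ᵐ[μ] f)
    {c : ℝ} (h : ∀ᵐ ω ∂μ, f ω ≤ c * ∫ ω', f ω' ∂μ) : Integrable f μ := by
  by_cases hm : AEStronglyMeasurable f μ
  · refine ⟨hm, HasFiniteIntegral.of_bounded (C := c * ∫ ω', f ω' ∂μ) ?_⟩
    filter_upwards [h, hf0] with ω hω hω0
    rwa [Real.norm_of_nonneg hω0]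
  · -- the junk value `∫ f = 0` of a non-measurable `f` forces `f = 0` a.e.
    rw [integral_non_aestronglyMeasurable hm, mul_zero] at h
    refine absurd (aestronglyMeasurable_const (b := (0 : ℝ)).congr ?_) hm
    filter_upwards [h, hf0] with ω hω hω0
    exact (le_antisymm hω hω0).symm

end Expectation

end Keyword

end PBM

open PBM in
theorem stmt7_general
    {Q S : Type*} [Fintype Q] [Fintype S] {n : ℕ}
    (P : Q → ℝ) (pi : Q → S → ℝ) (w : ℕ → ℝ)
    (hP0 : ∀ q, 0 ≤ P q)
    (hpi0 : ∀ q s, 0 ≤ pi q s) (hpi1 : ∀ q, ∑ s, pi q s = 1)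
    (hw : Antitone w) (hw0 : ∀ k, 0 ≤ w k)
    (c : ℝ) (hc : 0 ≤ c)
    {Ω : Type*} [MeasurableSpace Ω] (μ : Measure Ω) [IsProbabilityMeasure μ]
    (Vf : Ω → Fin n → Q → ℝ) (hV0 : ∀ ω i q, 0 ≤ Vf ω i q)
    (hhom : ∀ (i : Fin n) (s : S) (q₁ q₂ : Q), 0 < pi q₁ s → 0 < pi q₂ s →
      ∀ᵐ ω ∂μ, Vf ω i q₁ ≤ c * ∫ ω', Vf ω' i q₂ ∂μ)
    (hIntOpt : Integrable (fun ω => SWopt P w (Vf ω)) μ)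
    (hIntTr : Integrable (fun ω => SWtruth P pi w (Vf ω)) μ) :
    ∫ ω, SWopt P w (Vf ω) ∂μ ≤ c * ∫ ω, SWtruth P pi w (Vf ω) ∂μ := by
  have hVint : ∀ i q, Integrable (fun ω => Vf ω i q) μ := fun i q => by
    obtain ⟨s, -, hs⟩ :=
      Finset.exists_lt_of_sum_lt (by simp [hpi1 q] : ∑ _s : S, (0 : ℝ) < ∑ s, pi q s)
    exact integrable_of_ae_le_mul_integral (.of_forall fun ω => hV0 ω i q) (hhom i s q q hs hs)
  set m : Fin n → Q → ℝ := fun i q => ∫ ω, Vf ω i q ∂μ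
  have hae : ∀ᵐ ω ∂μ, ∀ i s q q', 0 < pi q s → 0 < pi q' s → Vf ω i q ≤ c * m i q' := by
    simp only [ae_all_iff, Filter.eventually_imp_distrib_left]
    exact hhom
  calc ∫ ω, SWopt P w (Vf ω) ∂μ ≤ ∫ _, c * SWtruth P pi w m ∂μ :=
        integral_mono_ae hIntOpt (integrable_const _) <|
          hae.mono fun ω => SWopt_le_mul_SWtruth hP0 hpi0 hpi1 hw hw0 hc
    _ = c * ∫ ω, rankedWelfare P pi w m (Vf ω) ∂μ := by
        rw [integral_const, integral_rankedWelfare P pi w m hVint]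
        simp [rankedWelfare, SWtruth, m]
    _ ≤ c * ∫ ω, SWtruth P pi w (Vf ω) ∂μ := by
        refine mul_le_mul_of_nonneg_left ?_ hc
        exact integral_mono (integrable_rankedWelfare P pi w m hVint) hIntTr
          fun ω => rankedWelfare_le_SWtruth hP0 hpi0 hw m (Vf ω)

open PBM in
/-- if the auction system is `c`-expected-homogeneous, the
expected optimal welfare is at most `c` times the expected welfare of the
truthful keyword-bid profile `𝔳`. -/
theorem stmt7
    {Q S : Type*} [Fintype Q] [Fintype S] {n : ℕ}
    (P : Q → ℝ) (pi : Q → S → ℝ) (w : ℕ → ℝ)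
    (hP0 : ∀ q, 0 ≤ P q) (hP1 : ∑ q, P q = 1)
    (hpi0 : ∀ q s, 0 ≤ pi q s) (hpi1 : ∀ q, ∑ s, pi q s = 1)
    (hS : ∀ s : S, ∃ q, 0 < pi q s)
    (hw : Antitone w) (hw0 : ∀ k, 0 ≤ w k)
    (c : ℝ) (hc : 0 ≤ c)
    {Ω : Type*} [MeasurableSpace Ω] (μ : Measure Ω) [IsProbabilityMeasure μ]
    (Vf : Ω → Fin n → Q → ℝ) (hV0 : ∀ ω i q, 0 ≤ Vf ω i q)
    (hhom : ∀ (i : Fin n) (s : S) (q₁ q₂ : Q), 0 < pi q₁ s → 0 < pi q₂ s →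
      ∀ᵐ ω ∂μ, Vf ω i q₁ ≤ c * ∫ ω', Vf ω' i q₂ ∂μ)
    (hIntOpt : Integrable (fun ω => SWopt P w (Vf ω)) μ)
    (hIntTr : Integrable (fun ω => SWtruth P pi w (Vf ω)) μ) :
    ∫ ω, SWopt P w (Vf ω) ∂μ ≤ c * ∫ ω, SWtruth P pi w (Vf ω) ∂μ :=
  stmt7_general P pi w hP0 hpi0 hpi1 hw hw0 c hc μ Vf hV0 hhom hIntOpt hIntTr
end
end
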